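/- arXiv:math/0611416 — 3 statements merged into one kernel-verified Lean document; each statement's English description precedes it below -/
import Mathlib

section
/- Let G be a connected graph, let v be a vertex of G, and let r ∈ ℕ. For s ∈ [0,r] let B_s = B_s(v) be the ball of radius s centered at v, set B = B_r(v), and let Γ = {u ∈ B : u ∉ B_{r−1}} be the boundary of B. Assume B is of exact radius r, i.e. there exists u ∈ B whose distance from v in G is at least r. Then for every homomorphism f from B to ℤ there exists a homomorphism g from B to ℤ such that g agrees with f on Γ and R(g) ≥ r + 1. -/
/-!
Replace `f` by the McShane-type extension of its boundary values,
`g u = max_{w ∈ Γ} (f w - d_B(u, w))`, with `d_B` the distance inside the ball `B`. Since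
`f w - d_B(u, w) ≡ f u (mod 2)`, `g` changes by exactly one along edges, and since `f` is
1-Lipschitz for `d_B`, `g = f` on `Γ`. If `w₀ ∈ Γ` attains the maximum at the centre, then
`g v = f w₀ - r` and `g w₀ = f w₀`, so `g` takes all `r + 1` values in between along a
geodesic from `v` to `w₀`.
-/

open SimpleGraph

namespace SimpleGraph

variable {W : Type*} {H : SimpleGraph W} {f : W → ℤ} {a b : W}

theorem Walk.abs_sub_le_length (hf : ∀ x y, H.Adj x y → |f x - f y| ≤ 1) (p : H.Walk a b) :
    |f a - f b| ≤ p.length := by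
  induction p with
  | nil => simp
  | @cons x y _ hxy _ ih =>
    rw [length_cons, Nat.cast_succ]
    exact (abs_sub_le _ (f y) _).trans (by linarith [hf x y hxy])

theorem Walk.even_sub_sub_length (hf : ∀ x y, H.Adj x y → |f x - f y| = 1) (p : H.Walk a b) :
    Even (f a - f b - p.length) := by
  induction p with
  | nil => simp
  | @cons x y _ hxy _ ih =>
    obtain ⟨k, hk⟩ := ih
    rw [length_cons, Nat.cast_succ]
    rcases abs_eq zero_le_one |>.mp (hf x y hxy) with h | h
    · exact ⟨k, by omega⟩
    · exact ⟨k - 1, by omega⟩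

theorem Walk.exists_mem_support_eq (hf : ∀ x y, H.Adj x y → |f x - f y| ≤ 1) (p : H.Walk a b)
    {m : ℤ} (ham : f a ≤ m) (hmb : m ≤ f b) : ∃ x ∈ p.support, f x = m := by
  induction p with
  | nil => exact ⟨_, start_mem_support _, le_antisymm ham hmb⟩
  | @cons x y _ hxy _ ih =>
    by_cases hxm : f x = m
    · exact ⟨x, start_mem_support _, hxm⟩
    · have := abs_le.mp (hf x y hxy)
      obtain ⟨z, hz, hzm⟩ := ih (by omega) hmb
      exact ⟨z, by simp [hz], hzm⟩

theorem Reachable.abs_sub_le_dist (hf : ∀ x y, H.Adj x y → |f x - f y| ≤ 1)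
    (h : H.Reachable a b) : |f a - f b| ≤ H.dist a b := by
  obtain ⟨p, hp⟩ := h.exists_walk_length_eq_dist
  exact hp ▸ p.abs_sub_le_length hf

theorem Reachable.even_sub_sub_dist (hf : ∀ x y, H.Adj x y → |f x - f y| = 1)
    (h : H.Reachable a b) : Even (f a - f b - H.dist a b) := by
  obtain ⟨p, hp⟩ := h.exists_walk_length_eq_dist
  exact hp ▸ p.even_sub_sub_length hf

theorem Reachable.toNat_sub_add_one_le_ncard_range (hf : ∀ x y, H.Adj x y → |f x - f y| ≤ 1)
    (h : H.Reachable a b) (hfin : (Set.range f).Finite) :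
    (f b + 1 - f a).toNat ≤ (Set.range f).ncard := by
  obtain ⟨p⟩ := h
  have hsub : (Finset.Icc (f a) (f b) : Set ℤ) ⊆ Set.range f := fun m hm ↦ by
    rw [Finset.coe_Icc] at hm
    obtain ⟨x, -, hx⟩ := p.exists_mem_support_eq hf hm.1 hm.2
    exact ⟨x, hx⟩
  rw [← Int.card_Icc, ← Set.ncard_coe_finset]
  exact Set.ncard_le_ncard hsub hfin

theorem Connected.range_subset_Icc (hH : H.Connected) (hf : ∀ x y, H.Adj x y → |f x - f y| ≤ 1)
    {c : W} {r : ℕ} (hr : ∀ x, H.dist c x ≤ r) : Set.range f ⊆ Set.Icc (f c - r) (f c + r) := by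
  rintro _ ⟨x, rfl⟩
  have := abs_le.mp ((hH c x).abs_sub_le_dist hf)
  have : (H.dist c x : ℤ) ≤ r := by exact_mod_cast hr x
  constructor <;> linarith

noncomputable def maxExtension (H : SimpleGraph W) (Γ : Set W) (f : W → ℤ) (u : W) : ℤ :=
  sSup ((fun w ↦ f w - H.dist u w) '' Γ)

section maxExtension

variable {Γ : Set W}

theorem bddAbove_sub_dist (hH : H.Connected) (hf : ∀ x y, H.Adj x y → |f x - f y| ≤ 1)
    (u : W) : BddAbove ((fun w ↦ f w - H.dist u w) '' Γ) := by
  refine ⟨f u, ?_⟩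
  rintro _ ⟨w, -, rfl⟩
  have := abs_le.mp ((hH u w).abs_sub_le_dist hf)
  linarith

theorem le_maxExtension (hH : H.Connected) (hf : ∀ x y, H.Adj x y → |f x - f y| ≤ 1)
    {w : W} (hw : w ∈ Γ) (u : W) : f w - H.dist u w ≤ maxExtension H Γ f u :=
  le_csSup (bddAbove_sub_dist hH hf u) ⟨w, hw, rfl⟩

theorem maxExtension_le (hΓ : Γ.Nonempty) {u : W} {m : ℤ}
    (h : ∀ w ∈ Γ, f w - H.dist u w ≤ m) : maxExtension H Γ f u ≤ m :=
  csSup_le (hΓ.image _) (by rintro _ ⟨w, hw, rfl⟩; exact h w hw)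

theorem exists_maxExtension_eq (hH : H.Connected) (hf : ∀ x y, H.Adj x y → |f x - f y| ≤ 1)
    (hΓ : Γ.Nonempty) (u : W) : ∃ w ∈ Γ, maxExtension H Γ f u = f w - H.dist u w :=
  let ⟨w, hw, h⟩ := Int.csSup_mem (hΓ.image _) (bddAbove_sub_dist hH hf u)
  ⟨w, hw, h.symm⟩

theorem maxExtension_eq_of_mem (hH : H.Connected) (hf : ∀ x y, H.Adj x y → |f x - f y| ≤ 1)
    {u : W} (hu : u ∈ Γ) : maxExtension H Γ f u = f u := by
  refine le_antisymm (maxExtension_le ⟨u, hu⟩ fun w _ ↦ ?_) ?_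
  · have := abs_le.mp ((hH u w).abs_sub_le_dist hf)
    linarith
  · simpa using le_maxExtension hH hf hu u

theorem even_maxExtension_sub (hH : H.Connected) (hf : ∀ x y, H.Adj x y → |f x - f y| = 1)
    (hΓ : Γ.Nonempty) (u : W) : Even (maxExtension H Γ f u - f u) := by
  obtain ⟨w, -, hw⟩ := exists_maxExtension_eq hH (fun x y h ↦ (hf x y h).le) hΓ u
  obtain ⟨k, hk⟩ := (hH u w).even_sub_sub_dist hf
  exact ⟨-k - H.dist u w, by omega⟩

theorem maxExtension_le_add_one_of_adj (hH : H.Connected)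
    (hf : ∀ x y, H.Adj x y → |f x - f y| ≤ 1) (hΓ : Γ.Nonempty) (hab : H.Adj a b) :
    maxExtension H Γ f a ≤ maxExtension H Γ f b + 1 := by
  refine maxExtension_le hΓ fun w hw ↦ ?_
  have := le_maxExtension hH hf hw b
  have : H.dist b w ≤ H.dist a w + 1 := by
    rw [dist_comm, dist_comm (u := a)]
    rcases hab.diff_dist_adj (u := w) with h | h | h <;> omega
  linarith

theorem abs_maxExtension_sub_of_adj (hH : H.Connected)
    (hf : ∀ x y, H.Adj x y → |f x - f y| = 1) (hΓ : Γ.Nonempty) (hab : H.Adj a b) :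
    |maxExtension H Γ f a - maxExtension H Γ f b| = 1 := by
  have hf' : ∀ x y, H.Adj x y → |f x - f y| ≤ 1 := fun x y h ↦ (hf x y h).le
  have := maxExtension_le_add_one_of_adj hH hf' hΓ hab
  have := maxExtension_le_add_one_of_adj hH hf' hΓ hab.symm
  obtain ⟨k, hk⟩ := even_maxExtension_sub hH hf hΓ a
  obtain ⟨l, hl⟩ := even_maxExtension_sub hH hf hΓ b
  have := abs_eq zero_le_one |>.mp (hf a b hab)
  rw [abs_eq zero_le_one]
  omega

end maxExtension

variable {V : Type*} {G : SimpleGraph V} {v : V} {r : ℕ}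

def closedBall (G : SimpleGraph V) (v : V) (r : ℕ) : Set V := {u | G.dist v u ≤ r}

theorem center_mem_closedBall : v ∈ G.closedBall v r := by
  simp [closedBall]

theorem Walk.dist_le_length_of_mem_support {u x : V} (p : G.Walk v u) (hx : x ∈ p.support) :
    G.dist v x ≤ p.length := by
  classical
  exact (dist_le _).trans (p.length_takeUntil_le_length hx)

theorem Connected.exists_walk_support_subset_closedBall (hG : G.Connected) {u : V}
    (hu : u ∈ G.closedBall v r) :
    ∃ p : G.Walk v u, p.length = G.dist v u ∧ ∀ x ∈ p.support, x ∈ G.closedBall v r := by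
  obtain ⟨p, hp⟩ := (hG v u).exists_walk_length_eq_dist
  exact ⟨p, hp, fun x hx ↦ (p.dist_le_length_of_mem_support hx).trans (hp.trans_le hu)⟩

theorem Connected.induce_closedBall (hG : G.Connected) (v : V) (r : ℕ) :
    (G.induce (G.closedBall v r)).Connected := by
  rw [connected_iff_exists_forall_reachable]
  refine ⟨⟨v, center_mem_closedBall⟩, fun ⟨u, hu⟩ ↦ ?_⟩
  obtain ⟨p, -, hp⟩ := hG.exists_walk_support_subset_closedBall hu
  exact ⟨p.induce _ hp⟩

theorem Connected.dist_induce_closedBall_center (hG : G.Connected) {u : V}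
    (hu : u ∈ G.closedBall v r) :
    (G.induce (G.closedBall v r)).dist ⟨v, center_mem_closedBall⟩ ⟨u, hu⟩ = G.dist v u := by
  refine le_antisymm ?_ ?_
  · obtain ⟨p, hpl, hp⟩ := hG.exists_walk_support_subset_closedBall hu
    calc _ ≤ (p.induce _ hp).length := dist_le _
      _ = p.length := by
        have := (p.induce _ hp).length_map (Embedding.induce (G.closedBall v r)).toHom
        rwa [Walk.map_induce, eq_comm] at this
      _ = G.dist v u := hpl
  · obtain ⟨q, hq⟩ := ((hG.induce_closedBall v r) ⟨v, _⟩ ⟨u, hu⟩).exists_walk_length_eq_dist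
    calc G.dist v u ≤ (q.map (Embedding.induce _).toHom).length := dist_le _
      _ = _ := by rw [Walk.length_map, hq]

theorem Connected.add_one_le_ncard_range_maxExtension (hG : G.Connected)
    {f : G.closedBall v r → ℤ} (hf : ∀ x y, (G.induce _).Adj x y → |f x - f y| = 1)
    (hΓ : {x : G.closedBall v r | G.dist v x = r}.Nonempty) :
    r + 1 ≤ (Set.range (maxExtension (G.induce _) {x | G.dist v x = r} f)).ncard := by
  set e := maxExtension (G.induce _) {x : G.closedBall v r | G.dist v x = r} f
  have hH := hG.induce_closedBall v r
  have hf' := fun x y h ↦ (hf x y h).le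
  have he : ∀ x y, (G.induce _).Adj x y → |e x - e y| ≤ 1 :=
    fun x y h ↦ (abs_maxExtension_sub_of_adj hH hf hΓ h).le
  let c : G.closedBall v r := ⟨v, center_mem_closedBall⟩
  have hc : ∀ x, (G.induce _).dist c x = G.dist v x := fun x ↦
    hG.dist_induce_closedBall_center x.2
  obtain ⟨w, hw, hcw⟩ : ∃ w : G.closedBall v r, G.dist v w = r ∧ e c = f w - (G.induce _).dist c w :=
    exists_maxExtension_eq hH hf' hΓ c
  have hew : e w = f w := maxExtension_eq_of_mem hH hf' hw
  have hfin : (Set.range e).Finite := (Set.finite_Icc _ _).subset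
    (hH.range_subset_Icc he fun x ↦ (hc x).trans_le x.2)
  have := (hH c w).toNat_sub_add_one_le_ncard_range he hfin
  rw [hc, hw] at hcw
  omega

end SimpleGraph

theorem stmt3_general {V : Type} (G : SimpleGraph V) (hG : G.Connected)
    (v : V) (r : ℕ)
    -- the ball `B = B_r(v)` is of exact radius `r`:
    -- some vertex of the ball is at distance at least `r` from `v`
    (hexact : ∃ u, G.dist v u ≤ r ∧ r ≤ G.dist v u)
    -- `f` is a homomorphism from (the subgraph induced by) `B` to `ℤ`
    (f : V → ℤ)
    (hf : ∀ u w, G.dist v u ≤ r → G.dist v w ≤ r → G.Adj u w → |f u - f w| = 1) :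
    -- there is a homomorphism `g` from `B` to `ℤ` agreeing with `f` on the
    -- boundary `Γ = B \ B_{r-1}`, whose range on `B` has size at least `r+1`
    ∃ g : V → ℤ,
      (∀ u w, G.dist v u ≤ r → G.dist v w ≤ r → G.Adj u w → |g u - g w| = 1) ∧
      (∀ u, G.dist v u ≤ r → ¬ G.dist v u ≤ r - 1 → g u = f u) ∧
      r + 1 ≤ (g '' {u | G.dist v u ≤ r}).ncard := by
  classical
  have hH := hG.induce_closedBall v r
  have hfB : ∀ x y : G.closedBall v r, (G.induce _).Adj x y → |f x - f y| = 1 :=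
    fun x y hxy ↦ hf x y x.2 y.2 hxy
  obtain ⟨u₀, hu₀, hu₀'⟩ := hexact
  have hΓ : {x : G.closedBall v r | G.dist v x = r}.Nonempty :=
    ⟨⟨u₀, hu₀⟩, le_antisymm hu₀ hu₀'⟩
  set e := maxExtension (G.induce _) {x : G.closedBall v r | G.dist v x = r} (f ∘ (↑))
  refine ⟨fun u ↦ if hu : u ∈ G.closedBall v r then e ⟨u, hu⟩ else 0, ?_, ?_, ?_⟩
  · intro a b ha hb hab
    dsimp only
    rw [dif_pos (show a ∈ G.closedBall v r from ha), dif_pos (show b ∈ G.closedBall v r from hb)]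
    exact abs_maxExtension_sub_of_adj hH hfB hΓ (show (G.induce _).Adj ⟨a, ha⟩ ⟨b, hb⟩ from hab)
  · intro u hu hu'
    dsimp only
    rw [dif_pos (show u ∈ G.closedBall v r from hu)]
    exact maxExtension_eq_of_mem hH (fun x y h ↦ (hfB x y h).le)
      (show G.dist v u = r by omega)
  · rw [Set.image_eq_range, show (fun x : {u | G.dist v u ≤ r} ↦ _) = e from
      funext fun x ↦ dif_pos x.2]
    exact hG.add_one_le_ncard_range_maxExtension hfB hΓ

theorem stmt3 {V : Type} [Fintype V] (G : SimpleGraph V) (hG : G.Connected)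
    (v : V) (r : ℕ)
    -- the ball `B = B_r(v)` is of exact radius `r`:
    -- some vertex of the ball is at distance at least `r` from `v`
    (hexact : ∃ u, G.dist v u ≤ r ∧ r ≤ G.dist v u)
    -- `f` is a homomorphism from (the subgraph induced by) `B` to `ℤ`
    (f : V → ℤ)
    (hf : ∀ u w, G.dist v u ≤ r → G.dist v w ≤ r → G.Adj u w → |f u - f w| = 1) :
    -- there is a homomorphism `g` from `B` to `ℤ` agreeing with `f` on the
    -- boundary `Γ = B \ B_{r-1}`, whose range on `B` has size at least `r+1`
    ∃ g : V → ℤ,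
      (∀ u w, G.dist v u ≤ r → G.dist v w ≤ r → G.Adj u w → |g u - g w| = 1) ∧
      (∀ u, G.dist v u ≤ r → ¬ G.dist v u ≤ r - 1 → g u = f u) ∧
      r + 1 ≤ (g '' {u | G.dist v u ≤ r}).ncard :=
  stmt3_general G hG v r hexact f hf
end

section
/- Let n ≥ 4 be even, k ∈ ℕ, and let f ∈ H_{n,k} \ H⁰_{n,k} (i.e. the 0-layer is non-constant in f). Define f_↓ by f_↓(i,s) = f(i+1,s) − f(1,1) for all i ∈ ℤ_{n−2} and s ∈ [k]. Then f_↓ ∈ H⁰_{n−2,k}. -/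
open Filter

/-- The graph `C_{n,k}`: vertex set `ℤ_n × [k]`, with edges
`(i,s) ∼ (i+1,t)` for all `i ∈ ℤ_n` and `s,t ∈ [k]` (addition modulo `n`). -/
def Cnk (n k : ℕ) : SimpleGraph (ZMod n × Fin k) :=
  SimpleGraph.fromRel fun a b => a.1 + 1 = b.1

/-- `f` is a graph homomorphism to `ℤ`: it changes by exactly `1` along edges. -/
def IsHomZ {V : Type} (G : SimpleGraph V) (f : V → ℤ) : Prop :=
  ∀ a b, G.Adj a b → |f a - f b| = 1

/-- `H_{n,k}`: homomorphisms from `C_{n,k}` to `ℤ` with `f(0,1) = 0`. -/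
def Hnk (n k : ℕ) (hk : 0 < k) : Set (ZMod n × Fin k → ℤ) :=
  {f | IsHomZ (Cnk n k) f ∧ f (0, ⟨0, hk⟩) = 0}

/-- The `i`-layer is constant in `f`. -/
def LayerConst {n k : ℕ} (f : ZMod n × Fin k → ℤ) (i : ZMod n) : Prop :=
  ∀ s t, f (i, s) = f (i, t)

/-- `NC(f)`: the set of non-constant layers of `f`. -/
def NCset {n k : ℕ} (f : ZMod n × Fin k → ℤ) : Set (ZMod n) :=
  {i | ¬ LayerConst f i}

/-- `H⁰_{n,k}`: homomorphisms in `H_{n,k}` mapping the whole `0`-layer to `0`. -/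
def H0nk (n k : ℕ) (hk : 0 < k) : Set (ZMod n × Fin k → ℤ) :=
  {f | f ∈ Hnk n k hk ∧ ∀ s, f (0, s) = 0}

/-- The range size `R(f)`: the number of distinct values taken by `f`. -/
noncomputable def rngZ {V : Type} (f : V → ℤ) : ℕ := (Set.range f).ncard

/-- The map `f ↦ f_↓`, `f_↓(i,s) = f(i+1,s) − f(1,1)`, defined for
`i ∈ ℤ_{n−2}`, `s ∈ [k]` (reading `i+1` in `ℤ_n`). -/
def fdown (n k : ℕ) (hk : 0 < k) (f : ZMod n × Fin k → ℤ) :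
    ZMod (n - 2) × Fin k → ℤ :=
  fun p => f (((p.1.val + 1 : ℕ) : ZMod n), p.2) - f ((1 : ZMod n), ⟨0, hk⟩)

/-!
If the `0`-layer of `f` takes two distinct values, every vertex of layers `1` and `-1` is at
distance one from both of them, which pins all these vertices to one common value `m`. So after
subtracting `m` and deleting layers `0` and `-1`, the edge from layer `n - 2` to layer `-1` can be
redirected to layer `1`: the result is a homomorphism on the shorter cylinder whose `0`-layer
(the old layer `1`) is identically `0`.
-/

theorem Int.eq_of_abs_sub_eq_one_of_ne {a b c d : ℤ} (hab : a ≠ b)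
    (hac : |a - c| = 1) (hbc : |b - c| = 1) (had : |a - d| = 1) (hbd : |b - d| = 1) :
    c = d := by
  rw [abs_eq zero_le_one] at hac hbc had hbd
  omega

theorem ZMod.val_add_one_eq_or {m : ℕ} [NeZero m] (i : ZMod m) :
    (i + 1).val = i.val + 1 ∨ (i + 1).val = 0 ∧ i.val + 1 = m := by
  have hi := i.val_lt
  rw [ZMod.val_add, ZMod.val_one_eq_one_mod]
  rcases Nat.lt_or_ge 1 m with hm | hm
  · rw [Nat.mod_eq_of_lt hm]
    rcases Nat.lt_or_ge (i.val + 1) m with h | h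
    · exact .inl (Nat.mod_eq_of_lt h)
    · right
      rw [show i.val + 1 = m by omega, Nat.mod_self]
      exact ⟨rfl, rfl⟩
  · obtain rfl : m = 1 := by have := NeZero.ne m; omega
    exact .inr ⟨Nat.mod_one _, by omega⟩

theorem Cnk_adj_add_one {n : ℕ} (k : ℕ) (hn : 1 < n) (i : ZMod n) (s t : Fin k) :
    (Cnk n k).Adj (i, s) (i + 1, t) := by
  have : Fact (1 < n) := ⟨hn⟩
  refine (SimpleGraph.fromRel_adj _ _ _).2 ⟨fun h => ?_, .inl rfl⟩
  simpa using congrArg Prod.fst h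

theorem isHomZ_Cnk_of_abs_sub_add_one {n k : ℕ} {g : ZMod n × Fin k → ℤ}
    (hg : ∀ i s t, |g (i, s) - g (i + 1, t)| = 1) : IsHomZ (Cnk n k) g := by
  rintro ⟨i, s⟩ ⟨j, t⟩ hij
  obtain ⟨-, rfl | rfl⟩ := (SimpleGraph.fromRel_adj _ _ _).1 hij
  · exact hg i s t
  · rw [abs_sub_comm]
    exact hg j t s

theorem IsHomZ.apply_add_one_eq_apply_sub_one {n k : ℕ} (hn : 1 < n)
    {f : ZMod n × Fin k → ℤ} (hf : IsHomZ (Cnk n k) f) {i : ZMod n}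
    (hi : ¬ LayerConst f i) (s t : Fin k) : f (i + 1, s) = f (i - 1, t) := by
  simp only [LayerConst, not_forall] at hi
  obtain ⟨a, b, hab⟩ := hi
  have below : ∀ c, |f (i - 1, t) - f (i, c)| = 1 := fun c => by
    simpa using hf _ _ (Cnk_adj_add_one k hn (i - 1) t c)
  refine Int.eq_of_abs_sub_eq_one_of_ne hab (hf _ _ (Cnk_adj_add_one k hn i a s))
    (hf _ _ (Cnk_adj_add_one k hn i b s)) ?_ ?_ <;> rw [abs_sub_comm] <;> exact below _

theorem abs_fdown_sub_fdown_add_one {n k : ℕ} (hn : 2 < n) (hk : 0 < k)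
    {f : ZMod n × Fin k → ℤ} (hf : IsHomZ (Cnk n k) f)
    (hlayers : ∀ s t, f (1, s) = f (-1, t)) (i : ZMod (n - 2)) (s t : Fin k) :
    |fdown n k hk f (i, s) - fdown n k hk f (i + 1, t)| = 1 := by
  have : NeZero (n - 2) := ⟨by omega⟩
  -- Layer `i + 1` of `fdown` is either the successor of layer `i` in `f`, or, at the
  -- wrap-around, layer `1`, which agrees with the true successor `-1`.
  have hnext : f ((((i + 1).val + 1 : ℕ) : ZMod n), t) =
      f (((i.val + 1 : ℕ) : ZMod n) + 1, t) := by
    rcases ZMod.val_add_one_eq_or i with h | ⟨h0, hlast⟩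
    · rw [h]
      push_cast
      rfl
    · have hwrap : ((i.val + 1 : ℕ) : ZMod n) + 1 = -1 := by
        have hcast : ((i.val + 1 + 1 + 1 : ℕ) : ZMod n) = 0 := by
          rw [show i.val + 1 + 1 + 1 = n by omega, ZMod.natCast_self]
        push_cast at hcast ⊢
        linear_combination hcast
      rw [h0, hwrap]
      push_cast
      exact hlayers t t
  simp only [fdown, sub_sub_sub_cancel_right, hnext]
  exact hf _ _ (Cnk_adj_add_one k (by omega) _ s t)

theorem stmt8_general (n k : ℕ) (hn : 4 ≤ n) (hk : 0 < k)
    (f : ZMod n × Fin k → ℤ) (hf : f ∈ Hnk n k hk \ H0nk n k hk) :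
    fdown n k hk f ∈ H0nk (n - 2) k hk := by
  obtain ⟨⟨hhom, hf0⟩, hnot⟩ := hf
  have hnc : ¬ LayerConst f 0 := fun hc =>
    hnot ⟨⟨hhom, hf0⟩, fun s => (hc s ⟨0, hk⟩).trans hf0⟩
  have hlayers : ∀ s t, f (1, s) = f (-1, t) := by
    simpa using hhom.apply_add_one_eq_apply_sub_one (by omega) hnc
  have hzero : ∀ s, fdown n k hk f (0, s) = 0 := fun s => by
    simp [fdown, hlayers s ⟨0, hk⟩, hlayers ⟨0, hk⟩ ⟨0, hk⟩]
  exact ⟨⟨isHomZ_Cnk_of_abs_sub_add_one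
    (abs_fdown_sub_fdown_add_one (by omega) hk hhom hlayers), hzero _⟩, hzero⟩

theorem stmt8 (n k : ℕ) (hn : 4 ≤ n) (hne : Even n) (hk : 0 < k)
    (f : ZMod n × Fin k → ℤ) (hf : f ∈ Hnk n k hk \ H0nk n k hk) :
    fdown n k hk f ∈ H0nk (n - 2) k hk :=
  stmt8_general n k hn hk f hf
end

section
/- Let n ≥ 4 be even, k ∈ ℕ, and let I = {i₁ < ⋯ < i_ℓ} ⊆ [n−1] be a set of size ℓ ≥ 1 containing no two consecutive integers. Let f ∈ H(I,n) and let f′ be defined by f′(i,s) = f(i,s) for i < i_ℓ and f′(i,s) = f(i+2,s) for i ≥ i_ℓ, so that f′ ∈ H(I \ {i_ℓ}, n−2). Then RC(f) = RC(f′), i.e. the set of values taken on constant layers is the same for f and f′. -/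
open Filter

/-- `P(m)`: paths of length `m` on `ℤ` starting and ending at `0`. -/
def pathSet (m : ℕ) : Set (Fin (m + 1) → ℤ) :=
  {S | S 0 = 0 ∧ S (Fin.last m) = 0 ∧ ∀ i : Fin m, |S i.succ - S i.castSucc| = 1}

/-- `V_k = {1,-1}^k \ {(1,…,1), (-1,…,-1)}`. -/
def Vset (k : ℕ) : Set (Fin k → ℤ) :=
  {v | (∀ s, v s = 1 ∨ v s = -1) ∧ v ≠ (fun _ => 1) ∧ v ≠ (fun _ => -1)}

/-- `H(I,n)`: the homomorphisms in `H⁰_{n,k}` whose set of non-constant layers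
is exactly `I ⊆ [n-1]` (viewed inside `ℤ_n`). -/
def HIset (n k : ℕ) (hk : 0 < k) (I : Finset ℕ) : Set (ZMod n × Fin k → ℤ) :=
  {f | f ∈ H0nk n k hk ∧ NCset f = (fun j : ℕ => (j : ZMod n)) '' (I : Set ℕ)}

/-- `RC(f)`: the set of values taken by `f` on its constant layers. -/
def RCset {n k : ℕ} (hk : 0 < k) (f : ZMod n × Fin k → ℤ) : Set ℤ :=
  {z | ∃ i : ZMod n, LayerConst f i ∧ f (i, ⟨0, hk⟩) = z}

/-- The map `f ↦ f′` deleting the (top non-constant) layer `m` and the layer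
after it: `f′(i,s) = f(i,s)` for `i < m` and `f′(i,s) = f(i+2,s)` for `i ≥ m`
(indices read modulo `n`). -/
def fprime (n k : ℕ) (m : ℕ) (f : ZMod n × Fin k → ℤ) :
    ZMod (n - 2) × Fin k → ℤ :=
  fun p =>
    if p.1.val < m then f (((p.1.val : ℕ) : ZMod n), p.2)
    else f (((p.1.val + 2 : ℕ) : ZMod n), p.2)

/-- The vector `v_f ∈ {1,-1}^k`, `v_f(s) = f(i_ℓ,s) − f(i_ℓ−1,s)`. -/
def vf (n k : ℕ) (m : ℕ) (f : ZMod n × Fin k → ℤ) : Fin k → ℤ :=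
  fun s => f ((m : ZMod n), s) - f (((m - 1 : ℕ) : ZMod n), s)

/-!
A non-constant layer `m` of a homomorphism `f : C_{n,k} → ℤ` takes two values `a ≠ b`, and
every vertex of the layers `m - 1` and `m + 1` is adjacent to both, hence carries the value
`(a + b) / 2`. So layers `m ± 1` are constant with a common value. Passing to `f′` drops the
non-constant layer `m` and one of its two neighbours, while the other neighbour survives.
-/

section Layers

variable {n k : ℕ} {f : ZMod n × Fin k → ℤ}

lemma Cnk_adj_succ [Fact (1 < n)] (i : ZMod n) (s t : Fin k) :
    (Cnk n k).Adj (i, s) (i + 1, t) := by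
  rw [Cnk, SimpleGraph.fromRel_adj]
  exact ⟨fun h => by simpa using congrArg Prod.fst h, Or.inl rfl⟩

lemma IsHomZ.abs_sub_succ [Fact (1 < n)] (hf : IsHomZ (Cnk n k) f) (i : ZMod n) (s t : Fin k) :
    |f (i + 1, t) - f (i, s)| = 1 := by
  rw [abs_sub_comm]
  exact hf _ _ (Cnk_adj_succ i s t)

lemma two_mul_eq_add_of_abs_sub_eq_one {a b x : ℤ} (hab : a ≠ b) (ha : |a - x| = 1)
    (hb : |b - x| = 1) : 2 * x = a + b := by
  rw [abs_eq zero_le_one] at ha hb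
  omega

lemma IsHomZ.pred_eq_succ_of_not_layerConst [Fact (1 < n)] (hf : IsHomZ (Cnk n k) f)
    {i : ZMod n} (hi : ¬ LayerConst f i) (s t : Fin k) : f (i - 1, s) = f (i + 1, t) := by
  obtain ⟨s₀, t₀, hne⟩ : ∃ s₀ t₀, f (i, s₀) ≠ f (i, t₀) := by simpa [LayerConst] using hi
  have hpred (u : Fin k) : |f (i, u) - f (i - 1, s)| = 1 := by
    simpa using hf.abs_sub_succ (i - 1) s u
  have hsucc (u : Fin k) : |f (i, u) - f (i + 1, t)| = 1 := by
    rw [abs_sub_comm]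
    exact hf.abs_sub_succ i u t
  have := two_mul_eq_add_of_abs_sub_eq_one hne (hpred s₀) (hpred t₀)
  have := two_mul_eq_add_of_abs_sub_eq_one hne (hsucc s₀) (hsucc t₀)
  omega

lemma RCset_reindex {n' : ℕ} (hk : 0 < k) (g : ZMod n' → ZMod n)
    (hg : ∀ i, LayerConst f i →
      ∃ j, LayerConst f (g j) ∧ f (g j, ⟨0, hk⟩) = f (i, ⟨0, hk⟩)) :
    RCset hk (fun p => f (g p.1, p.2)) = RCset hk f := by
  ext z
  constructor
  · rintro ⟨j, hj, rfl⟩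
    exact ⟨g j, hj, rfl⟩
  · rintro ⟨i, hi, rfl⟩
    exact hg i hi

end Layers

section SkipTwoLayers

def skipTwoLayers (n m : ℕ) (j : ZMod (n - 2)) : ZMod n :=
  if j.val < m then (j.val : ZMod n) else ((j.val + 2 : ℕ) : ZMod n)

lemma fprime_eq_reindex (n k m : ℕ) (f : ZMod n × Fin k → ℤ) :
    fprime n k m f = fun p => f (skipTwoLayers n m p.1, p.2) := by
  funext p
  unfold fprime skipTwoLayers
  split_ifs <;> rfl

variable {n m : ℕ}

lemma mem_range_skipTwoLayers (hm : m < n) {i : ZMod n} (h₁ : i ≠ m - 1) (h₂ : i ≠ m)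
    (h₃ : i ≠ m + 1) : i ∈ Set.range (skipTwoLayers n m) := by
  have : NeZero n := ⟨by omega⟩
  have hv : i.val < n := i.val_lt
  have hi : ((i.val : ℕ) : ZMod n) = i := ZMod.natCast_zmod_val i
  have h₁' : i.val + 1 ≠ m := fun h => h₁ (eq_sub_of_add_eq (by rw [← h, Nat.cast_succ, hi]))
  have h₂' : i.val ≠ m := fun h => h₂ (by rw [← h, hi])
  have h₃' : i.val ≠ m + 1 := fun h => h₃ (by rw [← Nat.cast_add_one, ← h, hi])
  rcases lt_or_gt_of_ne h₂' with hlt | hgt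
  · refine ⟨(i.val : ZMod (n - 2)), ?_⟩
    rw [skipTwoLayers, ZMod.val_cast_of_lt (by omega), if_pos hlt, hi]
  · refine ⟨((i.val - 2 : ℕ) : ZMod (n - 2)), ?_⟩
    rw [skipTwoLayers, ZMod.val_cast_of_lt (by omega), if_neg (by omega),
      Nat.sub_add_cancel (by omega), hi]

lemma exists_skipTwoLayers_eq_pred_or_succ (hm₀ : 0 < m) (hm : m < n) :
    ∃ j, skipTwoLayers n m j = m - 1 ∨ skipTwoLayers n m j = m + 1 := by
  rcases (Nat.succ_le_of_lt hm).eq_or_lt with hn | hn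
  · refine ⟨0, Or.inr ?_⟩
    rw [skipTwoLayers, ZMod.val_zero, if_pos hm₀, Nat.cast_zero, ← Nat.cast_succ, hn,
      ZMod.natCast_self]
  · refine ⟨((m - 1 : ℕ) : ZMod (n - 2)), Or.inl ?_⟩
    rw [skipTwoLayers, ZMod.val_cast_of_lt (by omega), if_pos (by omega), Nat.cast_pred hm₀]

end SkipTwoLayers

theorem RCset_fprime {n k m : ℕ} (hk : 0 < k) {f : ZMod n × Fin k → ℤ}
    (hf : IsHomZ (Cnk n k) f) (hm₀ : 0 < m) (hm : m < n) (hnc : ¬ LayerConst f m) :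
    RCset hk (fprime n k m f) = RCset hk f := by
  have : Fact (1 < n) := ⟨by omega⟩
  have hnb := hf.pred_eq_succ_of_not_layerConst hnc
  have hneighbour (w : ZMod n) (hw : w = m - 1 ∨ w = m + 1) :
      LayerConst f w ∧ f (w, ⟨0, hk⟩) = f (m - 1, ⟨0, hk⟩) := by
    rcases hw with rfl | rfl
    · exact ⟨fun s t => (hnb s s).trans (hnb t s).symm, rfl⟩
    · exact ⟨fun s t => (hnb s s).symm.trans (hnb s t), (hnb _ _).symm⟩
  rw [fprime_eq_reindex]
  refine RCset_reindex hk _ fun i hi => ?_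
  by_cases hnear : i = m - 1 ∨ i = m + 1
  · obtain ⟨j, hj⟩ := exists_skipTwoLayers_eq_pred_or_succ hm₀ hm
    obtain ⟨hjc, hjv⟩ := hneighbour _ hj
    exact ⟨j, hjc, hjv.trans (hneighbour i hnear).2.symm⟩
  · rw [not_or] at hnear
    obtain ⟨j, rfl⟩ := mem_range_skipTwoLayers hm hnear.1 (by rintro rfl; exact hnc hi) hnear.2
    exact ⟨j, hi, rfl⟩

theorem stmt12_general (n k : ℕ) (hk : 0 < k)
    (I : Finset ℕ) (hIne : I.Nonempty)
    (hI : I ⊆ Finset.Icc 1 (n - 1))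
    (f : ZMod n × Fin k → ℤ) (hf : f ∈ HIset n k hk I) :
    RCset hk f = RCset hk (fprime n k (I.max' hIne) f) := by
  obtain ⟨⟨⟨hhom, -⟩, -⟩, hNC⟩ := hf
  have hmax := I.max'_mem hIne
  have hbounds := Finset.mem_Icc.mp (hI hmax)
  have hnc : ((I.max' hIne : ℕ) : ZMod n) ∈ NCset f := hNC ▸ ⟨_, hmax, rfl⟩
  exact (RCset_fprime hk hhom (by omega) (by omega) hnc).symm

theorem stmt12 (n k : ℕ) (hn : 4 ≤ n) (hne : Even n) (hk : 0 < k)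
    (I : Finset ℕ) (hIne : I.Nonempty) (ℓ : ℕ) (hℓ : I.card = ℓ) (hℓ1 : 1 ≤ ℓ)
    (hI : I ⊆ Finset.Icc 1 (n - 1)) (hcons : ∀ i ∈ I, i + 1 ∉ I)
    (f : ZMod n × Fin k → ℤ) (hf : f ∈ HIset n k hk I) :
    RCset hk f = RCset hk (fprime n k (I.max' hIne) f) :=
  stmt12_general n k hk I hIne hI f hf
end
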